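/- Let X be a Banach space and (x_i*)_{i=1}^∞ a sequence in X* equivalent to the unit vector basis of ℓ1(ℕ). Assume there is a sequence (Q_n)_n of bounded finite-rank projections on X satisfying: (i) Q_n[X] ⊆ Q_{n+1}[X] for all n and Q_n x → x for all x ∈ X; (ii) there exist a strictly increasing sequence (k_n)_n of natural numbers and 0 < ε < 1 with ε/(1−ε) < (sup_n ‖Q_n‖)⁻¹ such that for every n the subspace Q_n*[X*] is ε-close to span{x_i* : i = 1, …, k_n}. Then X is isomorphic to a Bourgain–Delbaen space. -/

import Mathlib

open scoped ENNReal
open Filter Topology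

set_option maxHeartbeats 1000000
set_option synthInstance.maxHeartbeats 400000

noncomputable section

/-- `ℓ∞(Γ)`. -/
abbrev Linf (Γ : Type*) : Type _ := lp (fun _ : Γ => ℝ) ∞

namespace BD

variable {Γ : Type*}

/-- The evaluation map on `ℓ∞(Γ)`, as a linear map. -/
def evalLM (γ : Γ) : Linf Γ →ₗ[ℝ] ℝ where
  toFun f := f γ
  map_add' f g := by simp
  map_smul' c f := by simp

/-- The evaluation functional `e_γ^*` on `ℓ∞(Γ)`. -/
def evalL (γ : Γ) : Linf Γ →L[ℝ] ℝ :=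
  LinearMap.mkContinuous (evalLM γ) 1 fun f => by
    rw [one_mul]
    exact lp.norm_apply_le_norm ENNReal.top_ne_zero f γ

/-- The restriction map `ℓ∞(Γ) → ℓ∞(A)`, as a linear map. -/
def restrLM (A : Finset Γ) : Linf Γ →ₗ[ℝ] (↥A → ℝ) where
  toFun f γ := f γ.1
  map_add' f g := by ext γ; simp
  map_smul' c f := by ext γ; simp

/-- The restriction operator `r_A : ℓ∞(Γ) → ℓ∞(A)` for a finite set `A ⊆ Γ`. -/
def restrCLM (A : Finset Γ) : Linf Γ →L[ℝ] (↥A → ℝ) :=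
  LinearMap.mkContinuous (restrLM A) 1 fun f => by
    rw [one_mul]
    refine (pi_norm_le_iff_of_nonneg (norm_nonneg f)).2 fun γ => ?_
    exact lp.norm_apply_le_norm ENNReal.top_ne_zero f γ.1

/-- The data defining a Bourgain-Delbaen space: a strictly increasing sequence of
nonempty finite subsets of `Γ` covering `Γ`, together with a uniformly bounded compatible
sequence of extension operators. -/
structure System (Γ : Type*) where
  Γs : ℕ → Finset Γ
  strict : StrictMono Γs
  nonempty : ∀ q, (Γs q).Nonempty
  covers : ∀ γ : Γ, ∃ q, γ ∈ Γs q
  i : ∀ q, (↥(Γs q) → ℝ) →L[ℝ] Linf Γ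
  extension : ∀ q (x : ↥(Γs q) → ℝ) (γ : ↥(Γs q)), i q x γ.1 = x γ
  compat : ∀ p q, p < q → ∀ x : ↥(Γs p) → ℝ, i p x = i q (restrCLM (Γs q) (i p x))
  bdd : BddAbove (Set.range fun q => ‖i q‖)

/-- `C = sup_q ‖i_q‖`. -/
def System.C (S : System Γ) : ℝ := ⨆ q, ‖S.i q‖

/-- `Δ_0 = Γ_0`, `Δ_q = Γ_q \ Γ_{q-1}`. -/
def System.Δ (S : System Γ) : ℕ → Finset Γ := fun q =>
  letI := Classical.decEq Γ
  match q with
  | 0 => S.Γs 0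
  | q + 1 => S.Γs (q + 1) \ S.Γs q

/-- The unique `q` with `γ ∈ Δ_q`. -/
def System.rk (S : System Γ) (γ : Γ) : ℕ :=
  letI := Classical.decEq Γ
  Nat.find (S.covers γ)

/-- The vector `d_γ = i_q (e_γ)` for `γ ∈ Δ_q`. -/
def System.dvec (S : System Γ) (γ : Γ) : Linf Γ :=
  letI := Classical.decEq Γ
  S.i (S.rk γ) fun δ => if (δ : Γ) = γ then 1 else 0

/-- `M_q = span {d_γ : γ ∈ Δ_q}`. -/
def System.M (S : System Γ) (q : ℕ) : Submodule ℝ (Linf Γ) :=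
  Submodule.span ℝ (S.dvec '' (S.Δ q : Set Γ))

/-- The Bourgain-Delbaen space: the closed linear span of the `d_γ`'s in `ℓ∞(Γ)`. -/
def System.space (S : System Γ) : Submodule ℝ (Linf Γ) :=
  (Submodule.span ℝ (Set.range S.dvec)).topologicalClosure


section ShortcutInstances

noncomputable instance (priority := 10000) instLinfNACG (Γ : Type*) :
    NormedAddCommGroup (Linf Γ) := inferInstance

noncomputable instance (priority := 10000) instLinfNS (Γ : Type*) :
    NormedSpace ℝ (Linf Γ) := inferInstance

noncomputable instance (priority := 10000) instSpaceNACG (S : System Γ) :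
    NormedAddCommGroup ↥S.space := inferInstance

noncomputable instance (priority := 10000) instSpaceNS (S : System Γ) :
    NormedSpace ℝ ↥S.space := inferInstance

noncomputable instance (priority := 10000) instDualNACG (S : System Γ) :
    NormedAddCommGroup (↥S.space →L[ℝ] ℝ) := inferInstance

noncomputable instance (priority := 10000) instDualNS (S : System Γ) :
    NormedSpace ℝ (↥S.space →L[ℝ] ℝ) := inferInstance

end ShortcutInstances

lemma dvec_mem (S : System Γ) (γ : Γ) : S.dvec γ ∈ S.space :=
  Submodule.le_topologicalClosure _ (Submodule.subset_span ⟨γ, rfl⟩)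

end BD

/-- `E₂` is `ε`-close to `E₁`: there is an invertible bounded operator `T` from `E₁` onto `E₂`
with `‖Tx - x‖ ≤ ε ‖x‖` for all `x ∈ E₁`. -/
def EpsClose {W : Type*} [NormedAddCommGroup W] [NormedSpace ℝ W] (ε : ℝ)
    (E₁ E₂ : Submodule ℝ W) : Prop :=
  ∃ T : ↥E₁ ≃L[ℝ] ↥E₂, ∀ x : ↥E₁, ‖(T x : W) - (x : W)‖ ≤ ε * ‖x‖

/-- The image `Q^*[X^*]` of the adjoint of `Q`, i.e. the set of functionals `g ∘ Q`. -/
def adjRange {X : Type*} [NormedAddCommGroup X] [NormedSpace ℝ X] (Q : X →L[ℝ] X) :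
    Submodule ℝ (X →L[ℝ] ℝ) where
  carrier := {f | ∃ g : X →L[ℝ] ℝ, f = g.comp Q}
  add_mem' := by rintro f g ⟨f', rfl⟩ ⟨g', rfl⟩; exact ⟨f' + g', by ext x; simp⟩
  zero_mem' := ⟨0, by ext x; simp⟩
  smul_mem' := by rintro c f ⟨g, rfl⟩; exact ⟨c • g, by ext x; simp⟩


/-! The functionals `x_i^*` embed `X` into `ℓ∞(ℕ)` by `J x = (x_i^* x)_i`. Norming `y ∈ Q_n[X]` by a
functional in `Q_n^*[X^*]` of norm at most `C = sup_n ‖Q_n‖` and replacing it by an `ε`-close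
combination of `x_1^*, …, x_{k_n}^*` gives `a (1 - ε (1 + C)) ‖y‖ ≤ C max_{i ≤ k_n} |x_i^* y|`,
where `a` is the lower `ℓ1` constant; the hypothesis on `ε` is exactly `ε (1 + C) < 1`. Hence
`y ↦ (x_i^* y)_{i ≤ k_n}` is injective on `Q_n[X]`, and since `Q_n^*[X^*]` has dimension `k_n` and
embeds into the dual of `Q_n[X]`, it is an isomorphism onto `ℓ∞^{k_n}` with uniformly bounded
inverse. Composing these inverses with `J` gives uniformly bounded extension operators; they are
compatible because their ranges `J(Q_n[X])` increase, and the closed span of the resulting `d_γ`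
is the closure of `⋃_n J(Q_n[X])`, which is `J(X)` because `J` is bounded below. -/

open scoped NNReal

section LowerEstimate

variable {ι E : Type*} [NormedAddCommGroup E] [NormedSpace ℝ E]

def HasLowerEllOneEstimate (xs : ι → E) (a : ℝ) : Prop :=
  ∀ (A : Finset ι) (lam : ι → ℝ), a * ∑ i ∈ A, |lam i| ≤ ‖∑ i ∈ A, lam i • xs i‖

variable {xs : ι → E} {a : ℝ}

theorem linearIndependent_of_lowerEstimate (ha : 0 < a)
    (hlow : HasLowerEllOneEstimate xs a) :
    LinearIndependent ℝ xs := by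
  rw [linearIndependent_iff']
  intro A lam hsum i hi
  have hzero : ∑ j ∈ A, |lam j| = 0 := by
    refine le_antisymm ?_ (Finset.sum_nonneg fun j _ => abs_nonneg _)
    have := hlow A lam
    rw [hsum, norm_zero] at this
    exact nonpos_of_mul_nonpos_right this ha
  exact abs_eq_zero.1 ((Finset.sum_eq_zero_iff_of_nonneg fun j _ => abs_nonneg _).1 hzero i hi)

theorem finrank_span_image_of_lowerEstimate (ha : 0 < a)
    (hlow : HasLowerEllOneEstimate xs a)
    (s : Finset ι) : Module.finrank ℝ (Submodule.span ℝ (xs '' s)) = s.card := by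
  rw [Set.image_eq_range]
  exact (finrank_span_eq_card
    ((linearIndependent_of_lowerEstimate ha hlow).comp _ Subtype.val_injective)).trans (by simp)

end LowerEstimate

section Functionals

variable {X : Type*} [NormedAddCommGroup X] [NormedSpace ℝ X]

theorem mul_abs_apply_le_of_mem_span {ι : Type*} {xs : ι → X →L[ℝ] ℝ} {a : ℝ} (ha : 0 ≤ a)
    (hlow : HasLowerEllOneEstimate xs a)
    {s : Finset ι} {e : X →L[ℝ] ℝ} (he : e ∈ Submodule.span ℝ (xs '' s)) {y : X} {B : ℝ}
    (hB0 : 0 ≤ B) (hB : ∀ i ∈ s, |xs i y| ≤ B) :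
    a * |e y| ≤ ‖e‖ * B := by
  obtain ⟨lam, rfl⟩ := (Submodule.mem_span_image_finset_iff_exists_fun' ℝ).1 he
  have hy : |(∑ i ∈ s, lam i • xs i) y| ≤ (∑ i ∈ s, |lam i|) * B := by
    rw [sum_apply, Finset.sum_mul]
    refine (Finset.abs_sum_le_sum_abs _ _).trans (Finset.sum_le_sum fun i hi => ?_)
    rw [smul_apply, smul_eq_mul, abs_mul]
    exact mul_le_mul_of_nonneg_left (hB i hi) (abs_nonneg _)
  calc a * |(∑ i ∈ s, lam i • xs i) y| ≤ a * ((∑ i ∈ s, |lam i|) * B) :=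
        mul_le_mul_of_nonneg_left hy ha
    _ ≤ ‖∑ i ∈ s, lam i • xs i‖ * B := by
        rw [← mul_assoc]; exact mul_le_mul_of_nonneg_right (hlow s lam) hB0

theorem EpsClose.exists_norm_sub_le {W : Type*} [NormedAddCommGroup W] [NormedSpace ℝ W]
    {ε : ℝ} {E F : Submodule ℝ W} (h : EpsClose ε E F) {f : W} (hf : f ∈ F) :
    ∃ e ∈ E, ‖f - e‖ ≤ ε * ‖e‖ := by
  obtain ⟨T, hT⟩ := h
  exact ⟨T.symm ⟨f, hf⟩, (T.symm ⟨f, hf⟩).2, by simpa using hT (T.symm ⟨f, hf⟩)⟩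

theorem apply_proj_eq_of_mem_adjRange {Q : X →L[ℝ] X} (hQ : ∀ x, Q (Q x) = Q x)
    {f : X →L[ℝ] ℝ} (hf : f ∈ adjRange Q) (x : X) : f (Q x) = f x := by
  obtain ⟨g, rfl⟩ := hf
  simp [hQ]

theorem exists_mem_adjRange_norming (Q : X →L[ℝ] X) {y : X} (hy : Q y = y) :
    ∃ f ∈ adjRange Q, ‖f‖ ≤ ‖Q‖ ∧ f y = ‖y‖ := by
  obtain ⟨g, hg, hgy⟩ := exists_dual_vector'' ℝ y
  refine ⟨g.comp Q, ⟨g, rfl⟩, ?_, by simpa [hy] using hgy⟩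
  calc ‖g.comp Q‖ ≤ ‖g‖ * ‖Q‖ := g.opNorm_comp_le Q
    _ ≤ ‖Q‖ := mul_le_of_le_one_left (norm_nonneg Q) hg

theorem mul_norm_le_of_epsClose_adjRange {ι : Type*} {xs : ι → X →L[ℝ] ℝ} {a : ℝ} (ha : 0 ≤ a)
    (hlow : HasLowerEllOneEstimate xs a)
    {Q : X →L[ℝ] X} {C ε : ℝ} (hQ : ‖Q‖ ≤ C) (hε0 : 0 ≤ ε) (hε1 : ε ≤ 1) {s : Finset ι}
    (hclose : EpsClose ε (Submodule.span ℝ (xs '' s)) (adjRange Q)) {y : X} (hy : Q y = y)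
    {B : ℝ} (hB0 : 0 ≤ B) (hB : ∀ i ∈ s, |xs i y| ≤ B) :
    a * (1 - ε * (1 + C)) * ‖y‖ ≤ C * B := by
  obtain ⟨f, hf, hfQ, hfy⟩ := exists_mem_adjRange_norming Q hy
  obtain ⟨e, he, hfe⟩ := hclose.exists_norm_sub_le hf
  have he_norm : (1 - ε) * ‖e‖ ≤ C := by
    have := norm_le_norm_add_norm_sub' e f
    rw [norm_sub_rev] at this
    linarith
  have hy_split : ‖y‖ ≤ ε * ‖e‖ * ‖y‖ + |e y| :=
    calc ‖y‖ = (f - e) y + e y := by rw [← hfy]; simp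
      _ ≤ ‖(f - e) y‖ + |e y| := add_le_add (Real.le_norm_self _) (le_abs_self _)
      _ ≤ ε * ‖e‖ * ‖y‖ + |e y| := by
        gcongr; exact ((f - e).le_opNorm y).trans (by gcongr)
  have he_y := mul_abs_apply_le_of_mem_span ha hlow he hB0 hB
  have h1 := mul_le_mul_of_nonneg_left hy_split (mul_nonneg ha (sub_nonneg.2 hε1))
  have h2 := mul_le_mul_of_nonneg_left he_norm (mul_nonneg (mul_nonneg ha hε0) (norm_nonneg y))
  have h3 := mul_le_mul_of_nonneg_right he_norm hB0
  have h4 := mul_le_mul_of_nonneg_left he_y (sub_nonneg.2 hε1)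
  linarith

theorem finrank_adjRange_le {Q : X →L[ℝ] X} (hQ : ∀ x, Q (Q x) = Q x)
    [FiniteDimensional ℝ (LinearMap.range (Q : X →ₗ[ℝ] X))] :
    Module.finrank ℝ (adjRange Q) ≤ Module.finrank ℝ (LinearMap.range (Q : X →ₗ[ℝ] X)) := by
  let restrict : adjRange Q →ₗ[ℝ] Module.Dual ℝ (LinearMap.range (Q : X →ₗ[ℝ] X)) :=
    (LinearMap.range (Q : X →ₗ[ℝ] X)).subtype.dualMap ∘ₗ ContinuousLinearMap.coeLM ℝ ∘ₗ
      (adjRange Q).subtype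
  have hinj : Function.Injective restrict := by
    intro f g hfg
    ext x
    have := LinearMap.congr_fun hfg ⟨Q x, x, rfl⟩
    rw [← apply_proj_eq_of_mem_adjRange hQ f.2, ← apply_proj_eq_of_mem_adjRange hQ g.2]
    simpa [restrict] using this
  simpa using LinearMap.finrank_le_finrank_of_injective hinj

end Functionals

section Coordinates

variable {X ι : Type*} [NormedAddCommGroup X] [NormedSpace ℝ X]

def coordMap (xs : ι → X →L[ℝ] ℝ) (s : Finset ι) (P : Submodule ℝ X) : P →ₗ[ℝ] (s → ℝ) :=
  LinearMap.pi fun i => (xs i).toLinearMap ∘ₗ P.subtype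

@[simp]
theorem coordMap_apply (xs : ι → X →L[ℝ] ℝ) (s : Finset ι) (P : Submodule ℝ X) (y : P) (i : s) :
    coordMap xs s P y i = xs i y :=
  rfl

variable {xs : ι → X →L[ℝ] ℝ} {a : ℝ} {Q : X →L[ℝ] X} {C ε : ℝ} {s : Finset ι}

theorem mul_norm_le_mul_norm_coordMap (ha : 0 ≤ a)
    (hlow : HasLowerEllOneEstimate xs a)
    (hQ : ‖Q‖ ≤ C) (hε0 : 0 ≤ ε) (hε1 : ε ≤ 1) (hproj : ∀ x, Q (Q x) = Q x)
    (hclose : EpsClose ε (Submodule.span ℝ (xs '' s)) (adjRange Q))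
    (y : LinearMap.range (Q : X →ₗ[ℝ] X)) :
    a * (1 - ε * (1 + C)) * ‖(y : X)‖ ≤ C * ‖coordMap xs s _ y‖ := by
  obtain ⟨x, hx⟩ := y.2
  exact mul_norm_le_of_epsClose_adjRange ha hlow hQ hε0 hε1 hclose (by rw [← hx]; exact hproj x)
    (norm_nonneg _) fun i hi => norm_le_pi_norm (coordMap xs s _ y) ⟨i, hi⟩

theorem coordMap_bijective_of_epsClose (ha : 0 < a)
    (hlow : HasLowerEllOneEstimate xs a)
    (hQ : ‖Q‖ ≤ C) (hε0 : 0 ≤ ε) (hε1 : ε ≤ 1) (hεC : ε * (1 + C) < 1)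
    (hproj : ∀ x, Q (Q x) = Q x)
    (hclose : EpsClose ε (Submodule.span ℝ (xs '' s)) (adjRange Q)) :
    Function.Bijective (coordMap xs s (LinearMap.range (Q : X →ₗ[ℝ] X))) := by
  have hinj : Function.Injective (coordMap xs s (LinearMap.range (Q : X →ₗ[ℝ] X))) := by
    refine (injective_iff_map_eq_zero _).2 fun y hy => ?_
    have := mul_norm_le_mul_norm_coordMap ha.le hlow hQ hε0 hε1 hproj hclose y
    rw [hy, norm_zero, mul_zero] at this
    have hpos : 0 < a * (1 - ε * (1 + C)) := mul_pos ha (by linarith)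
    exact Subtype.ext (norm_le_zero_iff.1 (nonpos_of_mul_nonpos_right this hpos))
  have := FiniteDimensional.of_injective _ hinj
  have hdim : Module.finrank ℝ (LinearMap.range (Q : X →ₗ[ℝ] X)) = Module.finrank ℝ (s → ℝ) := by
    refine le_antisymm (LinearMap.finrank_le_finrank_of_injective hinj) ?_
    obtain ⟨T, -⟩ := hclose
    calc Module.finrank ℝ (s → ℝ) = Module.finrank ℝ (Submodule.span ℝ (xs '' s)) := by
          rw [finrank_span_image_of_lowerEstimate ha hlow]; simp
      _ = Module.finrank ℝ (adjRange Q) := T.toLinearEquiv.finrank_eq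
      _ ≤ _ := finrank_adjRange_le hproj
  exact ⟨hinj, (LinearMap.injective_iff_surjective_of_finrank_eq_finrank hdim).1 hinj⟩

end Coordinates

namespace BD

variable {Γ : Type*}

theorem apply_restrCLM_of_mem_range {A : Finset Γ} {i : (A → ℝ) →L[ℝ] Linf Γ}
    (hi : ∀ x (γ : A), i x γ = x γ) {v : Linf Γ} (hv : v ∈ Set.range i) :
    i (restrCLM A v) = v := by
  obtain ⟨x, rfl⟩ := hv
  congr 1
  funext γ
  exact hi x γ

namespace System

variable (S : System Γ)

theorem mem_Γs_rk (γ : Γ) : γ ∈ S.Γs (S.rk γ) := by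
  let := Classical.decEq Γ
  exact Nat.find_spec (S.covers γ)

theorem rk_le {γ : Γ} {q : ℕ} (h : γ ∈ S.Γs q) : S.rk γ ≤ q := by
  let := Classical.decEq Γ
  exact Nat.find_min' (S.covers γ) h

theorem i_single_eq_dvec [DecidableEq Γ] {q : ℕ} {γ : Γ} (hγ : γ ∈ S.Γs q) (hq : S.rk γ = q) :
    S.i q (Pi.single ⟨γ, hγ⟩ 1) = S.dvec γ := by
  subst hq
  unfold dvec
  congr 1
  funext δ
  simp [Pi.single_apply, Subtype.ext_iff]

theorem i_mem_span_dvec_of_eq_zero {q : ℕ} (x : S.Γs q → ℝ)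
    (hx : ∀ δ : S.Γs q, S.rk δ < q → x δ = 0) :
    S.i q x ∈ Submodule.span ℝ (Set.range S.dvec) := by
  classical
  rw [← Finset.univ_sum_single x, map_sum]
  refine Submodule.sum_mem _ fun δ _ => ?_
  obtain hlt | hq := (S.rk_le δ.2).lt_or_eq
  · simp [hx δ hlt]
  · have hd : S.i q (Pi.single δ 1) = S.dvec δ := S.i_single_eq_dvec δ.2 hq
    rw [← mul_one (x δ), ← smul_eq_mul, Pi.single_smul', map_smul, hd]
    exact Submodule.smul_mem _ _ (Submodule.subset_span ⟨δ, rfl⟩)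

theorem i_mem_span_dvec (q : ℕ) (x : S.Γs q → ℝ) :
    S.i q x ∈ Submodule.span ℝ (Set.range S.dvec) := by
  induction q with
  | zero => exact S.i_mem_span_dvec_of_eq_zero x fun δ h => absurd h (Nat.not_lt_zero _)
  | succ p ih =>
    set w := restrCLM (S.Γs p) (S.i (p + 1) x)
    set u := x - restrCLM (S.Γs (p + 1)) (S.i p w)
    have hsplit : S.i (p + 1) x = S.i p w + S.i (p + 1) u := by
      rw [map_sub, ← S.compat p (p + 1) p.lt_succ_self w]
      abel
    have hu : ∀ δ : S.Γs (p + 1), S.rk δ < p + 1 → u δ = 0 := by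
      intro δ hδ
      have hδp : (δ : Γ) ∈ S.Γs p := S.strict.monotone (Nat.lt_succ_iff.1 hδ) (S.mem_Γs_rk δ)
      have hw : S.i p w δ = x δ := by
        rw [S.extension p w ⟨δ, hδp⟩]
        exact S.extension (p + 1) x δ
      change x δ - S.i p w δ = 0
      rw [hw, sub_self]
    rw [hsplit]
    exact add_mem (ih w) (S.i_mem_span_dvec_of_eq_zero u hu)

theorem isClosed_space : IsClosed (S.space : Set (Linf Γ)) :=
  Submodule.isClosed_topologicalClosure _

theorem i_mem_space (q : ℕ) (x : S.Γs q → ℝ) : S.i q x ∈ S.space :=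
  Submodule.le_topologicalClosure _ (S.i_mem_span_dvec q x)

theorem space_le {Z : Submodule ℝ (Linf Γ)} (hZ : IsClosed (Z : Set (Linf Γ)))
    (h : ∀ q x, S.i q x ∈ Z) : S.space ≤ Z :=
  Submodule.topologicalClosure_minimal _
    (Submodule.span_le.2 (Set.range_subset_iff.2 fun γ => by unfold dvec; exact h _ _)) hZ

end System

end BD

section Embedding

variable {X ι : Type*} [NormedAddCommGroup X] [NormedSpace ℝ X]

def toLinf (xs : ι → X →L[ℝ] ℝ) (hb : BddAbove (Set.range fun i => ‖xs i‖)) :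
    X →L[ℝ] Linf ι :=
  have hb' : ∃ b, 0 ≤ b ∧ ∀ i, ‖xs i‖ ≤ b := by
    obtain ⟨b, hb⟩ := hb
    exact ⟨max b 0, le_max_right _ _, fun i => (hb ⟨i, rfl⟩).trans (le_max_left _ _)⟩
  LinearMap.mkContinuousOfExistsBound
    { toFun x := ⟨fun i => xs i x, memℓp_infty <| by
        obtain ⟨b, -, hb⟩ := hb'
        exact ⟨b * ‖x‖, by rintro _ ⟨i, rfl⟩; exact (xs i).le_of_opNorm_le (hb i) x⟩⟩
      map_add' x y := by ext i; exact map_add (xs i) x y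
      map_smul' c x := by ext i; simp }
    (by
      obtain ⟨b, hb0, hb⟩ := hb'
      exact ⟨b, fun x => lp.norm_le_of_forall_le (by positivity) fun i =>
        (xs i).le_of_opNorm_le (hb i) x⟩)

variable {xs : ι → X →L[ℝ] ℝ} (hb : BddAbove (Set.range fun i => ‖xs i‖))

@[simp]
theorem toLinf_apply (x : X) (i : ι) : toLinf xs hb x i = xs i x :=
  rfl

theorem norm_coordMap_le_norm_toLinf (s : Finset ι) (P : Submodule ℝ X) (y : P) :
    ‖coordMap xs s P y‖ ≤ ‖toLinf xs hb y‖ :=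
  (pi_norm_le_iff_of_nonneg (norm_nonneg _)).2 fun i =>
    lp.norm_apply_le_norm ENNReal.top_ne_zero (toLinf xs hb y) i

theorem norm_le_mul_norm_toLinf {P : ℕ → Submodule ℝ X}
    (hdense : ∀ x, x ∈ closure (⋃ q, (P q : Set X))) {s : ℕ → Finset ι} {K : ℝ≥0}
    (hK : ∀ q (y : P q), ‖(y : X)‖ ≤ K * ‖coordMap xs (s q) (P q) y‖) (x : X) :
    ‖x‖ ≤ K * ‖toLinf xs hb x‖ := by
  refine closure_minimal (fun y hy => ?_) (isClosed_le continuous_norm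
    (continuous_const.mul (toLinf xs hb).continuous.norm)) (hdense x)
  obtain ⟨q, hyq⟩ := Set.mem_iUnion.1 hy
  exact (hK q ⟨y, hyq⟩).trans
    (mul_le_mul_of_nonneg_left (norm_coordMap_le_norm_toLinf hb (s q) (P q) ⟨y, hyq⟩) K.2)

end Embedding

section ExtensionOperators

variable {X ι : Type*} [NormedAddCommGroup X] [NormedSpace ℝ X]
  {xs : ι → X →L[ℝ] ℝ} (hb : BddAbove (Set.range fun i => ‖xs i‖))

def coordExt {s : Finset ι} {P : Submodule ℝ X} (h : Function.Bijective (coordMap xs s P)) :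
    (s → ℝ) →L[ℝ] Linf ι :=
  (toLinf xs hb).comp (P.subtypeL.comp
    (LinearMap.toContinuousLinearMap (LinearEquiv.ofBijective _ h).symm.toLinearMap))

variable {s : Finset ι} {P : Submodule ℝ X} (h : Function.Bijective (coordMap xs s P))

theorem coordExt_apply (v : s → ℝ) :
    coordExt hb h v = toLinf xs hb ((LinearEquiv.ofBijective _ h).symm v : X) :=
  rfl

theorem coordExt_coordMap (y : P) : coordExt hb h (coordMap xs s P y) = toLinf xs hb y := by
  rw [coordExt_apply, LinearEquiv.ofBijective_symm_apply_apply]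

theorem coordExt_apply_coe (v : s → ℝ) (i : s) : coordExt hb h v i = v i := by
  rw [coordExt_apply, toLinf_apply, ← coordMap_apply, LinearEquiv.apply_ofBijective_symm_apply]

theorem range_coordExt_subset {s' : Finset ι} {P' : Submodule ℝ X}
    (h' : Function.Bijective (coordMap xs s' P')) (hP : P ≤ P') :
    Set.range (coordExt hb h) ⊆ Set.range (coordExt hb h') := by
  rintro _ ⟨v, rfl⟩
  exact ⟨_, (coordExt_coordMap hb h' ⟨_, hP ((LinearEquiv.ofBijective _ h).symm v).2⟩).trans rfl⟩

theorem norm_coordExt_le {K : ℝ≥0} (hK : ∀ y : P, ‖(y : X)‖ ≤ K * ‖coordMap xs s P y‖) :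
    ‖coordExt hb h‖ ≤ ‖toLinf xs hb‖ * K := by
  refine ContinuousLinearMap.opNorm_le_bound _ (by positivity) fun v => ?_
  set y := (LinearEquiv.ofBijective _ h).symm v
  have hy : coordMap xs s P y = v := LinearEquiv.apply_ofBijective_symm_apply _ v
  calc ‖coordExt hb h v‖ ≤ ‖toLinf xs hb‖ * ‖(y : X)‖ := (toLinf xs hb).le_opNorm _
    _ ≤ ‖toLinf xs hb‖ * (K * ‖v‖) := by gcongr; rw [← hy]; exact hK y
    _ = _ := by ring

end ExtensionOperators

theorem exists_system_nonempty_equiv_of_coordMap_bijective {X : Type*} [NormedAddCommGroup X]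
    [NormedSpace ℝ X] [CompleteSpace X] {xs : ℕ → X →L[ℝ] ℝ}
    (hb : BddAbove (Set.range fun i => ‖xs i‖)) {P : ℕ → Submodule ℝ X} (hP : Monotone P)
    (hdense : ∀ x, x ∈ closure (⋃ q, (P q : Set X))) {k : ℕ → ℕ} (hk : StrictMono k)
    (hk0 : 0 < k 0) (hbij : ∀ q, Function.Bijective (coordMap xs (Finset.range (k q)) (P q)))
    {K : ℝ≥0} (hK : ∀ q (y : P q), ‖(y : X)‖ ≤ K * ‖coordMap xs (Finset.range (k q)) (P q) y‖) :
    ∃ S : BD.System ℕ, Nonempty (X ≃L[ℝ] S.space) := by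
  set J := toLinf xs hb
  have hJ : AntilipschitzWith K J :=
    AddMonoidHomClass.antilipschitz_of_bound J (norm_le_mul_norm_toLinf hb hdense hK)
  let S : BD.System ℕ :=
    { Γs q := Finset.range (k q)
      strict := Finset.strictMono_range.comp hk
      nonempty q := Finset.nonempty_range_iff.2 (hk0.trans_le (hk.monotone (Nat.zero_le q))).ne'
      covers γ := ⟨γ + 1, Finset.mem_range.2 (Nat.lt_of_succ_le hk.le_apply)⟩
      i q := coordExt hb (hbij q)
      extension q := coordExt_apply_coe hb (hbij q)
      compat p q hpq x := (BD.apply_restrCLM_of_mem_range (coordExt_apply_coe hb (hbij q))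
        (range_coordExt_subset hb (hbij p) (hbij q) (hP hpq.le) ⟨x, rfl⟩)).symm
      bdd := ⟨‖J‖ * K, Set.forall_mem_range.2 fun q => norm_coordExt_le hb (hbij q) (hK q)⟩ }
  have hJS : ∀ x, J x ∈ S.space := by
    intro x
    refine S.isClosed_space.closure_subset (map_mem_closure J.continuous (hdense x) fun y hy => ?_)
    obtain ⟨q, hyq⟩ := Set.mem_iUnion.1 hy
    rw [← coordExt_coordMap hb (hbij q) ⟨y, hyq⟩]
    exact S.i_mem_space q _
  have hclosed : IsClosed (LinearMap.range (J : X →ₗ[ℝ] Linf ℕ) : Set (Linf ℕ)) :=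
    hJ.isClosed_range J.uniformContinuous
  have hrange : LinearMap.range (J : X →ₗ[ℝ] Linf ℕ) = S.space :=
    le_antisymm (fun _ ⟨x, hx⟩ => hx ▸ hJS x) (S.space_le hclosed fun q v => ⟨_, rfl⟩)
  exact ⟨S, ⟨(J.equivRange hJ.injective hclosed).trans (ContinuousLinearEquiv.ofEq _ _ hrange)⟩⟩

theorem bddAbove_and_mul_one_add_iSup_lt_one {f : ℕ → ℝ} {ε : ℝ} (hε0 : 0 ≤ ε) (hε1 : ε < 1)
    (h : ε / (1 - ε) < (⨆ n, f n)⁻¹) : BddAbove (Set.range f) ∧ ε * (1 + ⨆ n, f n) < 1 := by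
  have hθ : 0 ≤ ε / (1 - ε) := div_nonneg hε0 (sub_nonneg.2 hε1.le)
  have hbdd : BddAbove (Set.range f) := by
    by_contra hnb
    rw [Real.iSup_of_not_bddAbove hnb, inv_zero] at h
    linarith
  refine ⟨hbdd, ?_⟩
  have hC : 0 < ⨆ n, f n := inv_pos.1 (hθ.trans_lt h)
  have h' := mul_lt_mul_of_pos_left ((div_lt_iff₀ (sub_pos.2 hε1)).1 h) hC
  rw [← mul_assoc, mul_inv_cancel₀ hC.ne', one_mul] at h'
  linarith

theorem statement13_general {X : Type*} [NormedAddCommGroup X] [NormedSpace ℝ X] [CompleteSpace X]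
    (xs : ℕ → (X →L[ℝ] ℝ))
    (hxs : ∃ a : ℝ, 0 < a ∧ ∃ b : ℝ, 0 < b ∧ ∀ (A : Finset ℕ) (lam : ℕ → ℝ),
      a * ∑ i ∈ A, |lam i| ≤ ‖∑ i ∈ A, lam i • xs i‖ ∧
      ‖∑ i ∈ A, lam i • xs i‖ ≤ b * ∑ i ∈ A, |lam i|)
    (Q : ℕ → (X →L[ℝ] X))
    (hproj : ∀ n x, Q n (Q n x) = Q n x)
    (hmono : ∀ n, LinearMap.range (Q n : X →ₗ[ℝ] X) ≤ LinearMap.range (Q (n + 1) : X →ₗ[ℝ] X))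
    (hconv : ∀ x : X, Filter.Tendsto (fun n => Q n x) Filter.atTop (nhds x))
    (k : ℕ → ℕ) (hk : StrictMono k) (ε : ℝ) (hε0 : 0 < ε) (hε1 : ε < 1)
    (hεQ : ε / (1 - ε) < (⨆ n, ‖Q n‖)⁻¹)
    (hclose : ∀ n, EpsClose ε (Submodule.span ℝ (xs '' {i | i < k n})) (adjRange (Q n))) :
    ∃ (Γ : Type) (S : BD.System Γ), Nonempty (X ≃L[ℝ] ↥S.space) := by
  obtain ⟨a, ha, b, -, hab⟩ := hxs
  have hlow : HasLowerEllOneEstimate xs a := fun A lam => (hab A lam).1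
  have hxs_bdd : BddAbove (Set.range fun i => ‖xs i‖) :=
    ⟨b, Set.forall_mem_range.2 fun i => by simpa using (hab {i} 1).2⟩
  obtain ⟨hQ_bdd, hεC⟩ := bddAbove_and_mul_one_add_iSup_lt_one hε0.le hε1 hεQ
  set C := ⨆ n, ‖Q n‖
  have hQC n : ‖Q n‖ ≤ C := le_ciSup hQ_bdd n
  have hpos : 0 < a * (1 - ε * (1 + C)) := mul_pos ha (by linarith)
  have hclose' n :
      EpsClose ε (Submodule.span ℝ (xs '' ↑(Finset.range (k n)))) (adjRange (Q n)) := by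
    rw [Finset.coe_range]; exact hclose n
  -- Shifting the index by one makes the first block `Γ_0 = range (k 1)` nonempty.
  refine ⟨ℕ, exists_system_nonempty_equiv_of_coordMap_bijective hxs_bdd
    (P := fun n => LinearMap.range (Q (n + 1) : X →ₗ[ℝ] X))
    (monotone_nat_of_le_succ fun n => hmono (n + 1))
    (fun x => mem_closure_of_tendsto ((hconv x).comp (tendsto_add_atTop_nat 1))
      (Eventually.of_forall fun n => Set.mem_iUnion.2 ⟨n, x, rfl⟩))
    (k := fun n => k (n + 1)) (fun _ _ h => hk (Nat.succ_lt_succ h))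
    ((Nat.zero_le _).trans_lt (hk Nat.zero_lt_one))
    (fun n =>
      coordMap_bijective_of_epsClose ha hlow (hQC _) hε0.le hε1.le hεC (hproj _) (hclose' _))
    (K := ⟨C / (a * (1 - ε * (1 + C))), div_nonneg ((norm_nonneg _).trans (hQC 0)) hpos.le⟩)
    fun n y => ?_⟩
  change ‖(y : X)‖ ≤ C / (a * (1 - ε * (1 + C))) * _
  rw [div_mul_eq_mul_div, le_div_iff₀ hpos, mul_comm]
  exact mul_norm_le_mul_norm_coordMap ha.le hlow (hQC _) hε0.le hε1.le (hproj _) (hclose' _) y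

/-- Let `X` be a Banach space, `(x_i^*)_i` a sequence in `X^*` equivalent to
the unit vector basis of `ℓ1(ℕ)`, and `(Q_n)_n` bounded finite rank projections with increasing
ranges, `Q_n x → x`, such that for some strictly increasing `(k_n)_n` and `0 < ε < 1` with
`ε/(1-ε) < (sup_n ‖Q_n‖)⁻¹` each `Q_n^*[X^*]` is `ε`-close to `span{x_i^* : i < k_n}`.
Then `X` is isomorphic to a Bourgain–Delbaen space. -/
theorem statement13 {X : Type*} [NormedAddCommGroup X] [NormedSpace ℝ X] [CompleteSpace X]
    (xs : ℕ → (X →L[ℝ] ℝ))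
    (hxs : ∃ a : ℝ, 0 < a ∧ ∃ b : ℝ, 0 < b ∧ ∀ (A : Finset ℕ) (lam : ℕ → ℝ),
      a * ∑ i ∈ A, |lam i| ≤ ‖∑ i ∈ A, lam i • xs i‖ ∧
      ‖∑ i ∈ A, lam i • xs i‖ ≤ b * ∑ i ∈ A, |lam i|)
    (Q : ℕ → (X →L[ℝ] X))
    (hproj : ∀ n x, Q n (Q n x) = Q n x)
    (hfinrank : ∀ n, FiniteDimensional ℝ ↥(LinearMap.range (Q n : X →ₗ[ℝ] X)))
    (hmono : ∀ n, LinearMap.range (Q n : X →ₗ[ℝ] X) ≤ LinearMap.range (Q (n + 1) : X →ₗ[ℝ] X))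
    (hconv : ∀ x : X, Filter.Tendsto (fun n => Q n x) Filter.atTop (nhds x))
    (k : ℕ → ℕ) (hk : StrictMono k) (ε : ℝ) (hε0 : 0 < ε) (hε1 : ε < 1)
    (hεQ : ε / (1 - ε) < (⨆ n, ‖Q n‖)⁻¹)
    (hclose : ∀ n, EpsClose ε (Submodule.span ℝ (xs '' {i | i < k n})) (adjRange (Q n))) :
    ∃ (Γ : Type) (S : BD.System Γ), Nonempty (X ≃L[ℝ] ↥S.space) :=
  statement13_general xs hxs Q hproj hmono hconv k hk ε hε0 hε1 hεQ hclose
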